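/- arXiv:1602.02174 — 4 statements merged into one kernel-verified Lean document; each statement's English description precedes it below -/
import Mathlib

section
/- The Proportional Plurality rule PP satisfies very strong DL-participation: for every profile ≿ with agent set N and every agent i ∈ N, PP(≿) ≿_i^{DL} PP(≿_{-i}), and PP(≿) ≻_i^{DL} PP(≿_{-i}) whenever some lottery p satisfies p ≻_i^{DL} PP(≿_{-i}). -/
open Finset
open scoped Classical

/-!
If `m` other agents remain, agent `i` joining moves the probability `x` of `i`'s top class
from `x` to `(1 + m x) / (m + 1)`, which exceeds `x` unless `x = 1`. More probability on the
top class is a strict DL improvement. If `x = 1`, both outcomes put all probability on the top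
class, and no lottery is DL-better than such a lottery.
-/

/-- A complete transitive preference relation over alternatives. -/
structure Pref (α : Type*) where
  rel : α → α → Prop
  total : ∀ a b, rel a b ∨ rel b a
  trans : ∀ a b c, rel a b → rel b c → rel a c

/-- Strict (asymmetric) part of a relation. -/
def strictly {β : Type*} (R : β → β → Prop) (x y : β) : Prop := R x y ∧ ¬ R y x

variable {α : Type*} [Fintype α]

/-- A lottery: nonnegative weights summing to one. -/
def IsLottery (p : α → ℝ) : Prop := (∀ a, 0 ≤ p a) ∧ ∑ a, p a = 1

/-- Probability assigned by `p` to the upper contour set of `y`. -/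
noncomputable def upperSum (R : Pref α) (p : α → ℝ) (y : α) : ℝ :=
  ∑ x ∈ univ.filter (fun x => R.rel x y), p x

/-- Stochastic dominance: `p` SD-dominates `q`. -/
def SDrel (R : Pref α) (p q : α → ℝ) : Prop := ∀ y, upperSum R q y ≤ upperSum R p y

/-- Probability assigned by `p` to the indifference class of `a`. -/
noncomputable def classSum (R : Pref α) (p : α → ℝ) (a : α) : ℝ :=
  ∑ x ∈ univ.filter (fun x => R.rel x a ∧ R.rel a x), p x

/-- Downward lexicographic extension: equal on all classes, or strictly more
probability on some class while agreeing on all strictly preferred classes. -/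
def DLrel (R : Pref α) (p q : α → ℝ) : Prop :=
  (∀ a, classSum R p a = classSum R q a) ∨
  (∃ a, classSum R q a < classSum R p a ∧
    ∀ b, strictly R.rel b a → classSum R p b = classSum R q b)

/-- A lottery extension: maps each preference to a relation on lotteries. -/
def LotteryExt (α : Type*) [Fintype α] := Pref α → (α → ℝ) → (α → ℝ) → Prop

/-- A complete lottery extension. -/
def CompleteExt (E : LotteryExt α) : Prop := ∀ (R : Pref α) p q, IsLottery p → IsLottery q → E R p q ∨ E R q p

/-- `E` is a refinement of SD. -/
def RefinesSD (E : LotteryExt α) : Prop :=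
  (∀ (R : Pref α) p q, SDrel R p q → E R p q) ∧
  (∀ (R : Pref α) p q, strictly (SDrel R) p q → strictly (E R) p q)

/-- A social decision scheme: agents are natural numbers; a profile is a finite
set of agents together with their preferences. -/
def SDS (α : Type*) [Fintype α] := Finset ℕ → (ℕ → Pref α) → (α → ℝ)

/-- `f` always returns lotteries. -/
def IsSDS (f : SDS α) : Prop := ∀ N pref, IsLottery (f N pref)

/-- `E`-participation: abstaining is never strictly better. -/
def Participation (E : LotteryExt α) (f : SDS α) : Prop :=
  ∀ (N : Finset ℕ) (pref : ℕ → Pref α) (i : ℕ), i ∈ N →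
    ¬ strictly (E (pref i)) (f (N.erase i) pref) (f N pref)

/-- Strong `E`-participation: participating is at least as good as abstaining. -/
def StrongParticipation (E : LotteryExt α) (f : SDS α) : Prop :=
  ∀ (N : Finset ℕ) (pref : ℕ → Pref α) (i : ℕ), i ∈ N →
    E (pref i) (f N pref) (f (N.erase i) pref)

/-- Very strong `E`-participation: participating is at least as good, and is
strictly better whenever some lottery is strictly `E`-better than the
abstention outcome. -/
def VeryStrongParticipation (E : LotteryExt α) (f : SDS α) : Prop :=
  ∀ (N : Finset ℕ) (pref : ℕ → Pref α) (i : ℕ), i ∈ N →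
    E (pref i) (f N pref) (f (N.erase i) pref) ∧
    ((∃ p, IsLottery p ∧ strictly (E (pref i)) p (f (N.erase i) pref)) →
      strictly (E (pref i)) (f N pref) (f (N.erase i) pref))

/-- The top indifference class of a preference. -/
noncomputable def topClass (R : Pref α) : Finset α :=
  univ.filter (fun a => ∀ b, R.rel a b)

/-- Proportional Plurality: each agent splits one point uniformly over his top
indifference class; probabilities are points divided by the number of agents. -/
noncomputable def PP : SDS α := fun N pref a =>
  if N.Nonempty then
    (∑ i ∈ N, if a ∈ topClass (pref i) then (1 : ℝ) / (topClass (pref i)).card else 0) / N.card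
  else (1 : ℝ) / Fintype.card α

lemma Pref.refl {β : Type*} (R : Pref β) (b : β) : R.rel b b :=
  (R.total b b).elim id id

lemma mem_topClass {R : Pref α} {a : α} : a ∈ topClass R ↔ ∀ b, R.rel a b := by
  simp [topClass]

lemma topClass_nonempty [Nonempty α] (R : Pref α) : (topClass R).Nonempty := by
  let _ : Preorder α :=
    { le := R.rel
      le_refl := R.refl
      le_trans := R.trans }
  obtain ⟨a, -, ha⟩ :=
    exists_minimal_of_wellFoundedLT (fun _ : α => True) ⟨Classical.ofNonempty, trivial⟩
  exact ⟨a, mem_topClass.2 fun b => (R.total a b).elim id (ha trivial)⟩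

lemma IsLottery.sum_le_one {p : α → ℝ} (hp : IsLottery p) (s : Finset α) : ∑ x ∈ s, p x ≤ 1 :=
  hp.2 ▸ Finset.sum_le_sum_of_subset_of_nonneg (Finset.subset_univ _) fun x _ _ => hp.1 x

section DL

variable {R : Pref α} {p q : α → ℝ}

lemma classSum_eq_sum_topClass {a : α} (ha : a ∈ topClass R) (p : α → ℝ) :
    classSum R p a = ∑ x ∈ topClass R, p x := by
  refine Finset.sum_congr (Finset.ext fun x => ?_) fun _ _ => rfl
  simp only [Finset.mem_filter, Finset.mem_univ, true_and, mem_topClass]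
  exact ⟨fun hx b => R.trans _ _ _ hx.1 (mem_topClass.1 ha b),
    fun hx => ⟨hx a, mem_topClass.1 ha x⟩⟩

/-- The indifference class of an `a` outside the top class is disjoint from it, so it gets
at most `1 - p (topClass R) = 0`. -/
lemma classSum_eq_zero_of_sum_topClass_eq_one (hp : IsLottery p)
    (hp1 : ∑ x ∈ topClass R, p x = 1) {a : α} (ha : a ∉ topClass R) : classSum R p a = 0 := by
  have hdisj : Disjoint (univ.filter fun x => R.rel x a ∧ R.rel a x) (topClass R) :=
    Finset.disjoint_left.2 fun x hx hxT => ha <| mem_topClass.2 fun b =>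
      R.trans _ _ _ (Finset.mem_filter.1 hx).2.2 (mem_topClass.1 hxT b)
  have hle := hp.sum_le_one ((univ.filter fun x => R.rel x a ∧ R.rel a x) ∪ topClass R)
  rw [Finset.sum_union hdisj, hp1] at hle
  exact le_antisymm (by rw [classSum]; linarith) (Finset.sum_nonneg fun x _ => hp.1 x)

lemma classSum_eq_of_sum_topClass_eq_one (hp : IsLottery p) (hq : IsLottery q)
    (hp1 : ∑ x ∈ topClass R, p x = 1) (hq1 : ∑ x ∈ topClass R, q x = 1) (a : α) :
    classSum R p a = classSum R q a := by
  by_cases ha : a ∈ topClass R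
  · rw [classSum_eq_sum_topClass ha, classSum_eq_sum_topClass ha, hp1, hq1]
  · rw [classSum_eq_zero_of_sum_topClass_eq_one hp hp1 ha,
      classSum_eq_zero_of_sum_topClass_eq_one hq hq1 ha]

/-- The top class is compared first, so more probability on it decides the DL comparison. -/
lemma DLrel_of_sum_topClass_lt (h : ∑ x ∈ topClass R, q x < ∑ x ∈ topClass R, p x) :
    DLrel R p q ∧ ¬ DLrel R q p := by
  obtain ⟨a, ha⟩ : (topClass R).Nonempty :=
    Finset.nonempty_iff_ne_empty.2 fun hT => by simp [hT] at h
  have hlt : classSum R q a < classSum R p a := by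
    rwa [classSum_eq_sum_topClass ha, classSum_eq_sum_topClass ha]
  have not_strictly_above : ∀ b, ¬ strictly R.rel b a := fun b hb => hb.2 (mem_topClass.1 ha b)
  refine ⟨Or.inr ⟨a, hlt, fun b hb => (not_strictly_above b hb).elim⟩, ?_⟩
  rintro (hall | ⟨c, hc, hcabove⟩)
  · exact (hall a).not_lt hlt
  · by_cases hcT : c ∈ topClass R
    · rw [classSum_eq_sum_topClass hcT, classSum_eq_sum_topClass hcT] at hc
      exact lt_asymm h hc
    · have hac : strictly R.rel a c :=
        ⟨mem_topClass.1 ha c, fun hca => hcT <| mem_topClass.2 fun b =>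
          R.trans _ _ _ hca (mem_topClass.1 ha b)⟩
      exact (hcabove a hac).not_lt hlt

lemma DLrel_of_sum_topClass_eq_one (hp : IsLottery p) (hp1 : ∑ x ∈ topClass R, p x = 1)
    (hq : IsLottery q) : DLrel R p q := by
  rcases (hq.sum_le_one (topClass R)).eq_or_lt with hq1 | hq1
  · exact Or.inl (classSum_eq_of_sum_topClass_eq_one hp hq hp1 hq1)
  · exact (DLrel_of_sum_topClass_lt (hp1 ▸ hq1)).1

end DL

section PP

noncomputable def topShare (R : Pref α) (a : α) : ℝ :=
  if a ∈ topClass R then (1 : ℝ) / (topClass R).card else 0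

lemma topShare_nonneg (R : Pref α) (a : α) : 0 ≤ topShare R a := by
  unfold topShare
  split <;> positivity

lemma sum_topClass_topShare [Nonempty α] (R : Pref α) :
    ∑ a ∈ topClass R, topShare R a = 1 := by
  have hc : ((topClass R).card : ℝ) ≠ 0 := by
    exact_mod_cast (topClass_nonempty R).card_pos.ne'
  have hshare : ∀ a ∈ topClass R, topShare R a = 1 / (topClass R).card := fun a ha => if_pos ha
  rw [Finset.sum_congr rfl hshare, Finset.sum_const, nsmul_eq_mul]
  field_simp

lemma sum_topShare [Nonempty α] (R : Pref α) : ∑ a, topShare R a = 1 := by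
  rw [← sum_topClass_topShare R]
  exact (Finset.sum_subset (Finset.subset_univ _) fun a _ ha => if_neg ha).symm

lemma sum_PP {N : Finset ℕ} (hN : N.Nonempty) (pref : ℕ → Pref α) (s : Finset α) :
    ∑ a ∈ s, PP N pref a = (∑ j ∈ N, ∑ a ∈ s, topShare (pref j) a) / N.card := by
  simp only [PP, if_pos hN, ← Finset.sum_div]
  rw [Finset.sum_comm]
  rfl

lemma PP_isLottery [Nonempty α] (N : Finset ℕ) (pref : ℕ → Pref α) :
    IsLottery (PP N pref) := by
  rcases N.eq_empty_or_nonempty with rfl | hN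
  · have hc : (Fintype.card α : ℝ) ≠ 0 := by exact_mod_cast Fintype.card_ne_zero
    refine ⟨fun a => by simp [PP], ?_⟩
    simp only [PP, Finset.not_nonempty_empty, if_false, Finset.sum_const, Finset.card_univ,
      nsmul_eq_mul]
    field_simp
  · have hc : (N.card : ℝ) ≠ 0 := by exact_mod_cast hN.card_pos.ne'
    refine ⟨fun a => ?_, ?_⟩
    · simp only [PP, if_pos hN]
      exact div_nonneg (Finset.sum_nonneg fun j _ => topShare_nonneg _ _) (Nat.cast_nonneg _)
    · simp only [sum_PP hN, sum_topShare, Finset.sum_const, nsmul_eq_mul, mul_one]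
      exact div_self hc

lemma sum_PP_eq_of_mem {N : Finset ℕ} {i : ℕ} (hi : i ∈ N) (pref : ℕ → Pref α)
    (s : Finset α) :
    ∑ a ∈ s, PP N pref a =
      (∑ a ∈ s, topShare (pref i) a + (N.erase i).card * ∑ a ∈ s, PP (N.erase i) pref a) /
        ((N.erase i).card + 1) := by
  have hrest : (N.erase i).card * ∑ a ∈ s, PP (N.erase i) pref a =
      ∑ j ∈ N.erase i, ∑ a ∈ s, topShare (pref j) a := by
    rcases (N.erase i).eq_empty_or_nonempty with hM | hM
    · simp [hM]
    · have hc : ((N.erase i).card : ℝ) ≠ 0 := by exact_mod_cast hM.card_pos.ne'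
      rw [sum_PP hM, mul_div_cancel₀ _ hc]
  have hcard : (N.card : ℝ) = (N.erase i).card + 1 := by
    exact_mod_cast (Finset.card_erase_add_one hi).symm
  rw [sum_PP ⟨i, hi⟩, ← Finset.add_sum_erase N _ hi, hrest, hcard]

lemma sum_topClass_PP_eq_of_mem [Nonempty α] {N : Finset ℕ} {i : ℕ} (hi : i ∈ N)
    (pref : ℕ → Pref α) :
    ∑ a ∈ topClass (pref i), PP N pref a =
      (1 + (N.erase i).card * ∑ a ∈ topClass (pref i), PP (N.erase i) pref a) /
        ((N.erase i).card + 1) := by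
  rw [sum_PP_eq_of_mem hi, sum_topClass_topShare]

end PP

/-- Proportional Plurality satisfies very strong DL-participation. -/
theorem PP_very_strong_DL_participation [Nonempty α] :
    VeryStrongParticipation DLrel (PP (α := α)) := by
  intro N pref i hi
  have hP := PP_isLottery N pref
  have hQ := PP_isLottery (N.erase i) pref
  have hjoin := sum_topClass_PP_eq_of_mem hi pref
  rcases (hQ.sum_le_one (topClass (pref i))).eq_or_lt with hQ1 | hQ1
  · -- abstaining already puts all probability on the top class, so nothing beats it
    have hP1 : ∑ a ∈ topClass (pref i), PP N pref a = 1 := by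
      rw [hjoin, hQ1, mul_one, add_comm, div_self (by positivity)]
    refine ⟨DLrel_of_sum_topClass_eq_one hP hP1 hQ, ?_⟩
    rintro ⟨r, hr, -, hnot⟩
    exact (hnot (DLrel_of_sum_topClass_eq_one hQ hQ1 hr)).elim
  · have hlt : ∑ a ∈ topClass (pref i), PP (N.erase i) pref a <
        ∑ a ∈ topClass (pref i), PP N pref a := by
      rw [hjoin, lt_div_iff₀ (by positivity)]
      linarith
    have hDL := DLrel_of_sum_topClass_lt hlt
    exact ⟨hDL.1, fun _ => hDL⟩
end

section
/- Serial dictatorship does not satisfy very strong DL-participation: there is a 3-agent, 3-alternative profile in which agent 3's participation does not change the outcome even though a DL-strictly better lottery for agent 3 exists. -/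
open Finset
open scoped Classical

variable {α : Type*} [Fintype α]

inductive Alt3 | a | b | c
  deriving DecidableEq

instance : Fintype Alt3 := ⟨{.a, .b, .c}, by intro x; cases x <;> simp⟩

def rank1 : Alt3 → ℕ | .a => 0 | .b => 0 | .c => 1
def rank23 : Alt3 → ℕ | .a => 2 | .b => 1 | .c => 0

/-- Agent 1's preference: `a ∼ b ≻ c`. -/
def pref1 : Pref Alt3 :=
  ⟨fun x y => rank1 x ≤ rank1 y, fun a b => le_total _ _, fun _ _ _ h1 h2 => le_trans h1 h2⟩

/-- Agents 2 and 3's preference: `c ≻ b ≻ a`. -/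
def pref23 : Pref Alt3 :=
  ⟨fun x y => rank23 x ≤ rank23 y, fun a b => le_total _ _, fun _ _ _ h1 h2 => le_trans h1 h2⟩

/-- Serial dictatorship: successively restrict to the most preferred
alternatives of each agent in order. -/
noncomputable def sdSet (prefs : List (Pref Alt3)) : Finset Alt3 :=
  prefs.foldl (fun S R => S.filter (fun a => ∀ b ∈ S, R.rel a b)) Finset.univ

/-- The degenerate (point) lottery on `x`. -/
def point (x : Alt3) : Alt3 → ℝ := fun y => if y = x then 1 else 0

/-- Serial dictatorship fails very strong DL-participation: with agents 1,2 the
outcome is the point lottery on `b`; adding agent 3 (preference `c ≻ b ≻ a`)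
leaves the outcome unchanged, although the point lottery on `c` is strictly
DL-better for agent 3. -/
theorem serial_dictatorship_fails_very_strong_DL :
    sdSet [pref1, pref23] = {Alt3.b} ∧
    sdSet [pref1, pref23, pref23] = {Alt3.b} ∧
    strictly (DLrel pref23) (point Alt3.c) (point Alt3.b) := by
  have huniv : (Finset.univ : Finset Alt3) = {Alt3.a, Alt3.b, Alt3.c} := rfl
  have h1 : (Finset.univ.filter (fun a => ∀ b ∈ (Finset.univ : Finset Alt3), pref1.rel a b))
      = ({Alt3.a, Alt3.b} : Finset Alt3) := by
    ext x
    simp only [Finset.mem_filter, huniv, Finset.mem_insert, Finset.mem_singleton]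
    cases x <;> simp [pref1, rank1]
  have h2 : (({Alt3.a, Alt3.b} : Finset Alt3).filter
      (fun a => ∀ b ∈ ({Alt3.a, Alt3.b} : Finset Alt3), pref23.rel a b))
      = ({Alt3.b} : Finset Alt3) := by
    ext x
    simp only [Finset.mem_filter, Finset.mem_insert, Finset.mem_singleton]
    cases x <;> simp [pref23, rank23]
  have h3 : (({Alt3.b} : Finset Alt3).filter
      (fun a => ∀ b ∈ ({Alt3.b} : Finset Alt3), pref23.rel a b))
      = ({Alt3.b} : Finset Alt3) := by
    ext x
    simp only [Finset.mem_filter, Finset.mem_singleton]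
    cases x <;> simp [pref23, rank23]
  have hsd1 : sdSet [pref1, pref23] = {Alt3.b} := by
    simp only [sdSet, List.foldl]
    simp only [h1, h2]
  have hsd2 : sdSet [pref1, pref23, pref23] = {Alt3.b} := by
    simp only [sdSet, List.foldl]
    simp only [h1, h2, h3]
  have hcls : ∀ y : Alt3, classSum pref23 (point Alt3.b) y =
      (if y = Alt3.b then (1:ℝ) else 0) := by
    intro y
    cases y <;>
      norm_num [classSum, pref23, rank23, point, Finset.sum_filter, huniv] <;> simp
  have hcls' : ∀ y : Alt3, classSum pref23 (point Alt3.c) y =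
      (if y = Alt3.c then (1:ℝ) else 0) := by
    intro y
    cases y <;>
      norm_num [classSum, pref23, rank23, point, Finset.sum_filter, huniv] <;> simp
  refine ⟨hsd1, hsd2, ?_, ?_⟩
  · right
    refine ⟨Alt3.c, ?_, ?_⟩
    · rw [hcls, hcls']; simp
    · intro b hb
      exfalso
      rcases hb with ⟨hb1, hb2⟩
      cases b <;> simp [pref23, rank23] at hb1 hb2
  · rintro (h | ⟨x, hx1, hx2⟩)
    · have := h Alt3.c
      rw [hcls, hcls'] at this
      simp at this
    · rw [hcls, hcls'] at hx1
      cases x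
      · simp at hx1
      · have := hx2 Alt3.c ⟨by simp [pref23, rank23], by simp [pref23, rank23]⟩
        rw [hcls, hcls'] at this
        simp at this
      · simp at hx1; norm_num at hx1
end

section
/- Serial dictatorship does not satisfy very strong SD-participation. -/
open Finset
open scoped Classical

variable {α : Type*} [Fintype α]

lemma stepA : Finset.univ.filter (fun x => ∀ y ∈ Finset.univ, pref1.rel x y) = ({.a, .b} : Finset Alt3) := by
  ext x
  simp only [mem_filter, mem_univ, true_and, mem_insert, mem_singleton, pref1]
  constructor
  · intro h; have h1 := h .a (by simp); have h2 := h .c (by simp)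
    cases x <;> simp_all [rank1]
  · rintro (rfl | rfl) y _ <;> cases y <;> simp [rank1]

lemma stepB : ({.a, .b} : Finset Alt3).filter (fun x => ∀ y ∈ ({.a, .b} : Finset Alt3), pref23.rel x y) = ({.b} : Finset Alt3) := by
  ext x
  simp only [mem_filter, mem_insert, mem_singleton, pref23]
  constructor
  · rintro ⟨h0, h⟩
    have h1 := h .a (by simp)
    cases x <;> simp_all [rank23]
  · rintro rfl
    refine ⟨Or.inr rfl, ?_⟩
    rintro y hy; cases y <;> simp_all [rank23]

lemma stepC : ({.b} : Finset Alt3).filter (fun x => ∀ y ∈ ({.b} : Finset Alt3), pref23.rel x y) = ({.b} : Finset Alt3) := by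
  ext x
  simp only [mem_filter, mem_singleton, pref23]
  constructor
  · rintro ⟨rfl, _⟩; rfl
  · rintro rfl; exact ⟨rfl, by rintro y hy; simp_all⟩

lemma h2set : sdSet [pref1, pref23] = {Alt3.b} := by
  simp only [sdSet, List.foldl]
  beta_reduce
  rw [filter_congr_decidable, stepA, filter_congr_decidable, stepB]

lemma h3set : sdSet [pref1, pref23, pref23] = {Alt3.b} := by
  simp only [sdSet, List.foldl]
  beta_reduce
  rw [filter_congr_decidable, stepA, filter_congr_decidable, stepB, filter_congr_decidable, stepC]

lemma sum3 (f : Alt3 → ℝ) : ∑ x, f x = f .a + f .b + f .c := by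
  show ∑ x ∈ ({.a,.b,.c} : Finset Alt3), f x = _
  simp [Finset.sum_insert, Finset.mem_insert]; ring

lemma upperSum_expand (p : Alt3 → ℝ) (y : Alt3) :
    upperSum pref23 p y = (if pref23.rel .a y then p .a else 0) + (if pref23.rel .b y then p .b else 0) + (if pref23.rel .c y then p .c else 0) := by
  rw [upperSum, Finset.sum_filter, sum3]

lemma sdpart : strictly (SDrel pref23) (point Alt3.c) (point Alt3.b) := by
  constructor
  · intro y; rw [upperSum_expand, upperSum_expand]
    cases y <;> simp [pref23, rank23, point] <;> norm_num
  · intro h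
    have := h .c
    rw [upperSum_expand, upperSum_expand] at this
    simp [pref23, rank23, point] at this
    norm_num at this

/-- Serial dictatorship fails very strong SD-participation: with agents 1,2 the
outcome is the point lottery on `b`; adding agent 3 (preference `c ≻ b ≻ a`)
leaves the outcome unchanged, although the point lottery on `c` strictly
SD-dominates it for agent 3. -/
theorem serial_dictatorship_fails_very_strong_SD :
    sdSet [pref1, pref23] = {Alt3.b} ∧
    sdSet [pref1, pref23, pref23] = {Alt3.b} ∧
    strictly (SDrel pref23) (point Alt3.c) (point Alt3.b) := by
  exact ⟨h2set, h3set, sdpart⟩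
end

section
/- ESR does not satisfy very strong SD-participation: in the 4-agent profile over {a,b} where agents 1,2 have a ≻ b and agents 3,4 have b ≻ a, any anonymous and neutral SDS outputs the lottery (1/2)a + (1/2)b, and the same lottery results when agent 4 is removed under ESR; since the point lottery on b is SD-strictly preferred by agent 4, very strong SD-participation fails. -/
open Finset
open scoped Classical

variable {α : Type*} [Fintype α]

inductive Alt2 | a | b
  deriving DecidableEq

instance : Fintype Alt2 := ⟨{.a, .b}, by intro x; cases x <;> simp⟩

def rankA : Alt2 → ℕ | .a => 0 | .b => 1
def rankB : Alt2 → ℕ | .a => 1 | .b => 0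

/-- Preference `a ≻ b`. -/
def prefA : Pref Alt2 :=
  ⟨fun x y => rankA x ≤ rankA y, fun a b => le_total _ _, fun _ _ _ h1 h2 => le_trans h1 h2⟩

/-- Preference `b ≻ a`. -/
def prefB : Pref Alt2 :=
  ⟨fun x y => rankB x ≤ rankB y, fun a b => le_total _ _, fun _ _ _ h1 h2 => le_trans h1 h2⟩

/-- Agents 1 and 2 prefer `a ≻ b`; agents 3 and 4 prefer `b ≻ a`. -/
def prof : ℕ → Pref Alt2 := fun i => if i ≤ 2 then prefA else prefB

/-- ESR fails very strong SD-participation: on the profile (1,2 : a ≻ b;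
3,4 : b ≻ a) ESR returns `(1/2)a + (1/2)b` both with and without agent 4, so
any SDS with these two outcomes fails very strong SD-participation, since the
point lottery on `b` is strictly SD-preferred by agent 4. -/
theorem ESR_fails_very_strong_SD_participation
    (ESR : SDS Alt2)
    (h1 : ESR ({1, 2, 3, 4} : Finset ℕ) prof = fun _ => (1 : ℝ) / 2)
    (h2 : ESR (({1, 2, 3, 4} : Finset ℕ).erase 4) prof = fun _ => (1 : ℝ) / 2) :
    ¬ VeryStrongParticipation SDrel ESR := by
  intro h
  obtain ⟨-, hstrict⟩ := h {1, 2, 3, 4} prof 4 (by simp)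
  have hp4 : prof 4 = prefB := rfl
  set p : Alt2 → ℝ := fun x => if x = .b then 1 else 0 with hp
  have hlot : IsLottery p := by
    constructor
    · intro x; cases x <;> simp [hp]
    · simp [hp]
  have huniv : (Finset.univ : Finset Alt2) = {.a, .b} := rfl
  have hsd : strictly (SDrel prefB) p (fun _ => (1 : ℝ) / 2) := by
    constructor
    · intro y
      cases y <;>
        simp [upperSum, huniv, Finset.filter_insert, Finset.filter_singleton, prefB, rankB, hp] <;> norm_num
    · intro hcon
      have := hcon .b
      simp [upperSum, huniv, Finset.filter_insert, Finset.filter_singleton, prefB, rankB, hp] at this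
      norm_num at this
  have := hstrict ⟨p, hlot, by rw [h2, hp4]; exact hsd⟩
  rw [h1, h2, hp4] at this
  exact this.2 (fun y => le_refl _)
end
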